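/- arXiv:2109.06779 — 2 statements merged into one kernel-verified Lean document; each statement's English description precedes it below -/
import Mathlib

section
/- The autonomous domination number of the cycle C_n on n vertices is n − 3, for all n ≥ 6. -/
open SimpleGraph

variable {V : Type*} [DecidableEq V]

/-- `S` is a dominating set of `G`. -/
def Dominates (G : SimpleGraph V) (S : Finset V) : Prop :=
  ∀ v : V, v ∈ S ∨ ∃ u ∈ S, G.Adj u v

/-- Dominating sets `S` and `S'` are adjacent: they differ by moving one
guard along an edge of `G`. -/
def AdjacentSets (G : SimpleGraph V) (S S' : Finset V) : Prop :=
  ∃ v v', v ∈ S ∧ v' ∉ S ∧ G.Adj v v' ∧ S' = insert v' (S.erase v)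

/-- `S` is a secure dominating set. -/
def SecureDominating (G : SimpleGraph V) (S : Finset V) : Prop :=
  Dominates G S ∧ ∀ v ∉ S, ∃ S', Dominates G S' ∧ AdjacentSets G S S' ∧ v ∈ S'

/-- An autonomously dominating family. -/
def AutFamily (G : SimpleGraph V) (F : Set (Finset V)) : Prop :=
  (∀ S ∈ F, Dominates G S) ∧
  (∀ S ∈ F, ∀ v ∉ S, ∃ S' ∈ F, AdjacentSets G S S' ∧ v ∈ S') ∧
  (∀ S ∈ F, ∀ S', Dominates G S' → AdjacentSets G S S' → S' ∈ F)

/-- An autonomously dominating set. -/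
def AutDomSet (G : SimpleGraph V) (S : Finset V) : Prop :=
  ∃ F, AutFamily G F ∧ S ∈ F

/-- The autonomous domination number. -/
noncomputable def autDomNum (G : SimpleGraph V) : ℕ :=
  sInf {k | ∃ S : Finset V, AutDomSet G S ∧ S.card = k}

/-- An eternally dominating family (no closure condition). -/
def EternalFamily (G : SimpleGraph V) (F : Set (Finset V)) : Prop :=
  (∀ S ∈ F, Dominates G S) ∧
  (∀ S ∈ F, ∀ v ∉ S, ∃ S' ∈ F, AdjacentSets G S S' ∧ v ∈ S')

/-- The eternal domination number. -/
noncomputable def eternalDomNum (G : SimpleGraph V) : ℕ :=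
  sInf {k | ∃ (F : Set (Finset V)) (S : Finset V),
    EternalFamily G F ∧ S ∈ F ∧ S.card = k}

/-- The domination number. -/
noncomputable def domNum (G : SimpleGraph V) : ℕ :=
  sInf {k | ∃ S : Finset V, Dominates G S ∧ S.card = k}

/-!
The vacant vertices of a dominating set of the cycle are exactly the sets without three
consecutive vertices. With three vacancies, any vacancy can be filled from a neighbour without
creating three consecutive ones, so the dominating sets of size `n - 3` form an autonomously
dominating family. With four or more vacancies, the closure condition lets us slide vacancies one
step at a time into the pattern `a, a + 1, a + 3, a + 4`; there the vacancy `a + 1` can only be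
filled by the guard at `a + 2`, which leaves `a + 2, a + 3, a + 4` vacant.
-/

open Finset Fin.NatCast Fin.CommRing

lemma Finset.compl_insert_erase {α : Type*} [Fintype α] [DecidableEq α] {s : Finset α} {a b : α}
    (hab : a ≠ b) : (insert a (s.erase b))ᶜ = insert b (sᶜ.erase a) := by
  rw [compl_insert, compl_erase, erase_insert_of_ne hab.symm]

def GuardMove (G : SimpleGraph V) (S S' : Finset V) : Prop :=
  Dominates G S' ∧ AdjacentSets G S S'

section Moves
variable {G : SimpleGraph V}

lemma AdjacentSets.card_eq {S S' : Finset V} (h : AdjacentSets G S S') : S'.card = S.card := by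
  obtain ⟨v, v', hv, hv', -, rfl⟩ := h
  rw [card_insert_of_notMem fun h => hv' (mem_of_mem_erase h), card_erase_add_one hv]

lemma card_eq_of_reflTransGen_guardMove {S S' : Finset V}
    (h : Relation.ReflTransGen (GuardMove G) S S') : S'.card = S.card := by
  induction h with
  | refl => rfl
  | tail _ hmove ih => rw [hmove.2.card_eq, ih]

lemma AutFamily.mem_of_reflTransGen {F : Set (Finset V)} (hF : AutFamily G F) {S S' : Finset V}
    (h : Relation.ReflTransGen (GuardMove G) S S') (hS : S ∈ F) : S' ∈ F := by
  induction h with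
  | refl => exact hS
  | tail _ hmove ih => exact hF.2.2 _ ih _ hmove.1 hmove.2

end Moves

section Cycle
variable {n : ℕ} [NeZero n]

lemma natCast_ne_zero_of_lt {k : ℕ} (h0 : 0 < k) (hk : k < n) : (k : Fin n) ≠ 0 := by
  rw [Ne, Fin.natCast_eq_zero]
  exact Nat.not_dvd_of_pos_of_lt h0 hk

lemma ne_of_sub_eq_natCast {x y : Fin n} {k : ℕ} (h0 : 0 < k) (hk : k < n) (h : x - y = k) :
    x ≠ y := by
  rintro rfl
  exact natCast_ne_zero_of_lt h0 hk (by rw [← h, sub_self])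

lemma injOn_add_natCast (a : Fin n) : Set.InjOn (fun i : ℕ => a + i) (Set.Iio n) :=
  fun _ hi _ hj h => CharP.natCast_injOn_Iio (Fin n) n hi hj (add_left_cancel h)

lemma card_le_card_of_add_natCast_mem {T : Finset (Fin n)} {s : Finset ℕ} (a : Fin n)
    (hs : ∀ i ∈ s, i < n) (h : ∀ i ∈ s, a + (i : Fin n) ∈ T) : s.card ≤ T.card :=
  card_le_card_of_injOn _ h ((injOn_add_natCast a).mono hs)

lemma cycleGraph_adj_iff (hn : 2 ≤ n) {u v : Fin n} :
    (cycleGraph n).Adj u v ↔ u = v - 1 ∨ u = v + 1 := by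
  obtain ⟨k, rfl⟩ : ∃ k, n = k + 2 := ⟨n - 2, by omega⟩
  rw [cycleGraph_adj, or_comm, sub_eq_iff_eq_add', eq_sub_iff_add_eq', sub_eq_iff_eq_add',
    add_comm u, eq_comm (a := v)]

def NoThreeConsecutive (T : Finset (Fin n)) : Prop :=
  ∀ v : Fin n, ¬(v ∈ T ∧ v + 1 ∈ T ∧ v + 2 ∈ T)

namespace NoThreeConsecutive

lemma mono {T T' : Finset (Fin n)} (hT : NoThreeConsecutive T) (h : T' ⊆ T) :
    NoThreeConsecutive T' :=
  fun v hv => hT v ⟨h hv.1, h hv.2.1, h hv.2.2⟩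

lemma insert_of_not_pair (hn : 3 ≤ n) {T : Finset (Fin n)} (hT : NoThreeConsecutive T) {p : Fin n}
    (h₁ : ¬(p - 2 ∈ T ∧ p - 1 ∈ T)) (h₂ : ¬(p - 1 ∈ T ∧ p + 1 ∈ T))
    (h₃ : ¬(p + 1 ∈ T ∧ p + 2 ∈ T)) : NoThreeConsecutive (insert p T) := by
  rintro v ⟨h0, h1, h2⟩
  have mem : ∀ {x}, x ∈ insert p T → x ≠ p → x ∈ T :=
    fun hx hne => (mem_insert.mp hx).resolve_left hne
  have ne₁ : ∀ x : Fin n, x + 1 ≠ x := fun x => ne_of_sub_eq_natCast (k := 1) one_pos (by omega)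
    (by push_cast; ring)
  have ne₂ : ∀ x : Fin n, x + 2 ≠ x := fun x => ne_of_sub_eq_natCast (k := 2) two_pos (by omega)
    (by push_cast; ring)
  by_cases e₀ : v = p
  · subst e₀
    exact h₃ ⟨mem h1 (ne₁ v), mem h2 (ne₂ v)⟩
  by_cases e₁ : v + 1 = p
  · subst e₁
    refine h₂ ⟨by simpa using mem h0 e₀, ?_⟩
    rw [add_assoc, one_add_one_eq_two]
    exact mem h2 (by simpa [add_assoc, one_add_one_eq_two] using ne₁ (v + 1))
  by_cases e₂ : v + 2 = p
  · subst e₂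
    refine h₁ ⟨by simpa using mem h0 e₀, ?_⟩
    rw [show v + 2 - 1 = v + 1 by ring]
    exact mem h1 e₁
  exact hT v ⟨mem h0 e₀, mem h1 e₁, mem h2 e₂⟩

lemma insert_of_add_one_notMem (hn : 3 ≤ n) {T : Finset (Fin n)} (hT : NoThreeConsecutive T)
    {p : Fin n} (hp : p + 1 ∉ T) (h : ¬(p - 2 ∈ T ∧ p - 1 ∈ T)) :
    NoThreeConsecutive (insert p T) :=
  hT.insert_of_not_pair hn h (fun h' => hp h'.2) (fun h' => hp h'.1)

lemma insert_of_sub_one_notMem (hn : 3 ≤ n) {T : Finset (Fin n)} (hT : NoThreeConsecutive T)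
    {p : Fin n} (hp : p - 1 ∉ T) (h : ¬(p + 1 ∈ T ∧ p + 2 ∈ T)) :
    NoThreeConsecutive (insert p T) :=
  hT.insert_of_not_pair hn (fun h' => hp h'.2) (fun h' => hp h'.1) h

lemma insert_sub_one_erase (hn : 3 ≤ n) {T : Finset (Fin n)} (hT : NoThreeConsecutive T)
    {v : Fin n} (h : ¬(v - 3 ∈ T ∧ v - 2 ∈ T)) : NoThreeConsecutive (insert (v - 1) (T.erase v)) :=
  (hT.mono (erase_subset v T)).insert_of_add_one_notMem hn (by simp) fun h' => h
    ⟨by simpa [show v - 1 - 2 = v - 3 by ring] using mem_of_mem_erase h'.1,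
      by simpa [show v - 1 - 1 = v - 2 by ring] using mem_of_mem_erase h'.2⟩

lemma insert_add_one_erase (hn : 3 ≤ n) {T : Finset (Fin n)} (hT : NoThreeConsecutive T)
    {v : Fin n} (h : ¬(v + 2 ∈ T ∧ v + 3 ∈ T)) : NoThreeConsecutive (insert (v + 1) (T.erase v)) :=
  (hT.mono (erase_subset v T)).insert_of_sub_one_notMem hn (by simp) fun h' => h
    ⟨by simpa [show v + 1 + 1 = v + 2 by ring] using mem_of_mem_erase h'.1,
      by simpa [show v + 1 + 2 = v + 3 by ring] using mem_of_mem_erase h'.2⟩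

end NoThreeConsecutive

lemma dominates_cycleGraph_iff (hn : 2 ≤ n) {S : Finset (Fin n)} :
    Dominates (cycleGraph n) S ↔ NoThreeConsecutive Sᶜ := by
  simp only [Dominates, cycleGraph_adj_iff hn]
  constructor
  · rintro hdom v ⟨h0, h1, h2⟩
    rcases hdom (v + 1) with h | ⟨u, hu, rfl | rfl⟩
    · exact mem_compl.mp h1 h
    · exact mem_compl.mp h0 (by rwa [add_sub_cancel_right] at hu)
    · exact mem_compl.mp h2 (by rwa [add_assoc, one_add_one_eq_two] at hu)
  · intro hT v
    by_contra! h
    refine hT (v - 1) ⟨mem_compl.mpr fun hm => (h.2 _ hm).1 rfl, by simpa using h.1,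
      mem_compl.mpr fun hm => (h.2 _ hm).2 ?_⟩
    ring

lemma guardMove_compl (hn : 2 ≤ n) {T : Finset (Fin n)} {g h : Fin n} (hh : h ∈ T) (hg : g ∉ T)
    (hadj : (cycleGraph n).Adj g h) (hT : NoThreeConsecutive (insert g (T.erase h))) :
    GuardMove (cycleGraph n) Tᶜ (insert g (T.erase h))ᶜ :=
  ⟨(dominates_cycleGraph_iff hn).mpr (by rwa [compl_compl]),
    g, h, mem_compl.mpr hg, fun h' => mem_compl.mp h' hh, hadj, compl_insert_erase hadj.ne⟩

lemma reflTransGen_slide (hn : 3 ≤ n) {T : Finset (Fin n)} (hT : NoThreeConsecutive T)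
    {p : Fin n} {e : ℕ} (hmem : p + e ∈ T) (hgap : ∀ j < e, p + (j : Fin n) ∉ T)
    (hside : ¬(p - 2 ∈ T ∧ p - 1 ∈ T)) :
    Relation.ReflTransGen (GuardMove (cycleGraph n)) Tᶜ (insert p (T.erase (p + e)))ᶜ ∧
      NoThreeConsecutive (insert p (T.erase (p + e))) := by
  induction e generalizing p with
  | zero =>
    rw [Nat.cast_zero, add_zero] at hmem ⊢
    rw [insert_erase hmem]
    exact ⟨.refl, hT⟩
  | succ e ih =>
    have hp : p ∉ T := by simpa using hgap 0 e.succ_pos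
    have hshift : p + 1 + (e : Fin n) = p + ((e + 1 : ℕ) : Fin n) := by push_cast; ring
    obtain ⟨hreach, -⟩ := ih (p := p + 1) (by rwa [hshift])
      (fun j hj => by simpa [add_assoc, add_comm (1 : Fin n)] using hgap (j + 1) (by omega))
      (fun h => hp (by simpa using h.2))
    rw [hshift] at hreach
    set X := T.erase (p + ((e + 1 : ℕ) : Fin n))
    have hX : p + 1 ∉ X := by
      rcases e with _ | e
      · simp [X]
      · exact fun h => hgap 1 (by omega) (by simpa using mem_of_mem_erase h)
    have hnew : NoThreeConsecutive (insert p X) :=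
      (hT.mono (erase_subset _ _)).insert_of_add_one_notMem hn hX
        fun h => hside ⟨mem_of_mem_erase h.1, mem_of_mem_erase h.2⟩
    refine ⟨hreach.tail ?_, hnew⟩
    have hX' : insert p X = insert p ((insert (p + 1) X).erase (p + 1)) := by rw [erase_insert hX]
    rw [hX'] at hnew ⊢
    refine guardMove_compl (by omega) (mem_insert_self _ _) ?_ ((cycleGraph_adj_iff (by omega)).mpr
      (Or.inl (add_sub_cancel_right p 1).symm)) hnew
    rw [mem_insert, not_or]
    exact ⟨(ne_of_sub_eq_natCast (k := 1) one_pos (by omega) (by push_cast; ring)).symm,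
      fun h => hp (mem_of_mem_erase h)⟩

lemma exists_reflTransGen_pull (hn : 3 ≤ n) {T : Finset (Fin n)} (hT : NoThreeConsecutive T)
    (a : Fin n) {k : ℕ} (hy : ∃ y ∈ T, ∀ i < k, y ≠ a + i)
    (hside : ¬(a + k - 2 ∈ T ∧ a + k - 1 ∈ T)) :
    ∃ T', Relation.ReflTransGen (GuardMove (cycleGraph n)) Tᶜ T'ᶜ ∧ NoThreeConsecutive T' ∧
      T'.card = T.card ∧ a + k ∈ T' ∧ ∀ i < k, a + (i : Fin n) ∈ T → a + (i : Fin n) ∈ T' := by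
  classical
  obtain ⟨y, hyT, hy⟩ := hy
  have hya : a + (((y - a).val : ℕ) : Fin n) = y := by rw [Fin.cast_val_eq_self, add_sub_cancel]
  have hwit : k ≤ (y - a).val ∧ a + (((y - a).val : ℕ) : Fin n) ∈ T := by
    refine ⟨?_, by rwa [hya]⟩
    by_contra! h
    exact hy _ h hya.symm
  have hex : ∃ d, k ≤ d ∧ a + (d : Fin n) ∈ T := ⟨_, hwit⟩
  obtain ⟨hkd, hdT⟩ := Nat.find_spec hex
  have hdn : Nat.find hex < n := (Nat.find_min' hex hwit).trans_lt (y - a).isLt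
  have hd : a + (k : Fin n) + ((Nat.find hex - k : ℕ) : Fin n) = a + (Nat.find hex : Fin n) := by
    rw [Nat.cast_sub hkd]; ring
  obtain ⟨hreach, hT'⟩ := reflTransGen_slide hn hT (by rwa [hd])
    (fun j hj h => Nat.find_min hex (m := k + j) (by omega)
      ⟨by omega, by simpa [add_assoc] using h⟩) hside
  rw [hd] at hreach hT'
  refine ⟨_, hreach, hT', ?_, mem_insert_self _ _, fun i hi hiT => mem_insert_of_mem
    (mem_erase.mpr ⟨(injOn_add_natCast a).ne (Set.mem_Iio.mpr (by omega)) (Set.mem_Iio.mpr hdn)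
      (by omega), hiT⟩)⟩
  have hcard := card_eq_of_reflTransGen_guardMove hreach
  rw [card_compl, card_compl] at hcard
  have := card_le_univ T
  have := card_le_univ (insert (a + (k : Fin n)) (T.erase (a + (Nat.find hex : Fin n))))
  omega

lemma NoThreeConsecutive.exists_mem_sub_one_notMem {T : Finset (Fin n)}
    (hT : NoThreeConsecutive T) (hne : T.Nonempty) : ∃ a ∈ T, a - 1 ∉ T := by
  obtain ⟨b, hb⟩ := hne
  by_cases hb₁ : b - 1 ∈ T
  · refine ⟨b - 1, hb₁, fun hb₂ => hT (b - 1 - 1) ⟨hb₂, by rwa [sub_add_cancel], ?_⟩⟩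
    rwa [show b - 1 - 1 + 2 = b by ring]
  · exact ⟨b, hb, hb₁⟩

lemma exists_reflTransGen_pattern (hn : 3 ≤ n) {T : Finset (Fin n)} (hT : NoThreeConsecutive T)
    (hcard : 4 ≤ T.card) :
    ∃ T' a, Relation.ReflTransGen (GuardMove (cycleGraph n)) Tᶜ T'ᶜ ∧
      a ∈ T' ∧ a + 1 ∈ T' ∧ a + 3 ∈ T' ∧ a + 4 ∈ T' := by
  -- Anchor at a vacancy `a` whose predecessor is guarded and pull the next vacancies back to
  -- `a + 1`, `a + 3` and `a + 4`; the guard at `a - 1`, resp. `a + 2`, keeps each last step legal.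
  obtain ⟨a, ha, ha₁⟩ := hT.exists_mem_sub_one_notMem (card_pos.mp (by omega))
  obtain ⟨T₁, r₁, hT₁, c₁, m₁, keep₁⟩ := exists_reflTransGen_pull hn hT a (k := 1)
    (by
      obtain ⟨y, hy, hya⟩ := exists_mem_notMem_of_card_lt_card (s := {a}) (t := T) (by simp; omega)
      exact ⟨y, hy, fun i hi => by obtain rfl : i = 0 := (by omega); simpa using hya⟩)
    (fun h => ha₁ (by convert h.1 using 1; push_cast; ring))
  push_cast at m₁
  have ha₁' : a ∈ T₁ := by simpa using keep₁ 0 one_pos (by simpa using ha)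
  have ha₂ : a + 2 ∉ T₁ := fun h => hT₁ a ⟨ha₁', m₁, h⟩
  obtain ⟨T₂, r₂, hT₂, c₂, m₂, keep₂⟩ := exists_reflTransGen_pull hn hT₁ a (k := 3)
    (by
      obtain ⟨y, hy, hya⟩ := exists_mem_notMem_of_card_lt_card (s := {a, a + 1, a + 2}) (t := T₁)
        (card_le_three.trans_lt (by omega))
      refine ⟨y, hy, fun i hi => ?_⟩
      simp only [mem_insert, mem_singleton, not_or] at hya
      interval_cases i <;> simp [hya])
    (fun h => ha₂ (by convert h.2 using 1; push_cast; ring))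
  push_cast at m₂
  have hb₀ : a ∈ T₂ := by simpa using keep₂ 0 (by norm_num) (by simpa using ha₁')
  have hb₁ : a + 1 ∈ T₂ := by simpa using keep₂ 1 (by norm_num) (by simpa using m₁)
  have hb₂ : a + 2 ∉ T₂ := fun h => hT₂ a ⟨hb₀, hb₁, h⟩
  obtain ⟨T₃, r₃, -, -, m₃, keep₃⟩ := exists_reflTransGen_pull hn hT₂ a (k := 4)
    (by
      obtain ⟨y, hy, hya⟩ := exists_mem_notMem_of_card_lt_card (s := {a, a + 1, a + 3}) (t := T₂)
        (card_le_three.trans_lt (by omega))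
      refine ⟨y, hy, fun i hi => ?_⟩
      simp only [mem_insert, mem_singleton, not_or] at hya
      interval_cases i <;> simp [hya]
      exact fun h => hb₂ (h ▸ hy))
    (fun h => hb₂ (by convert h.1 using 1; push_cast; ring))
  push_cast at m₃
  exact ⟨T₃, a, r₁.trans (r₂.trans r₃), by simpa using keep₃ 0 (by norm_num) (by simpa using hb₀),
    by simpa using keep₃ 1 (by norm_num) (by simpa using hb₁),
    by simpa using keep₃ 3 (by norm_num) (by simpa using m₂), m₃⟩

lemma AutFamily.compl_notMem_of_pattern (hn : 4 ≤ n) {F : Set (Finset (Fin n))}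
    (hF : AutFamily (cycleGraph n) F) {T : Finset (Fin n)} {a : Fin n} (h₀ : a ∈ T)
    (h₁ : a + 1 ∈ T) (h₃ : a + 3 ∈ T) (h₄ : a + 4 ∈ T) : Tᶜ ∉ F := by
  intro hTF
  have hT : NoThreeConsecutive T := by
    simpa using (dominates_cycleGraph_iff (by omega)).mp (hF.1 _ hTF)
  have h₂ : a + 2 ∉ T := fun h₂ => hT a ⟨h₀, h₁, h₂⟩
  obtain ⟨S', hS'F, ⟨u, w, hu, hw, huw, rfl⟩, h₁'⟩ := hF.2.1 _ hTF (a + 1) (by simpa using h₁)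
  obtain rfl : w = a + 1 := by
    rcases mem_insert.mp h₁' with h | h
    · exact h.symm
    · exact absurd (mem_of_mem_erase h) (by simpa using h₁)
  obtain rfl : u = a + 2 := by
    rcases (cycleGraph_adj_iff (by omega)).mp huw with rfl | rfl
    · exact absurd h₀ (by simpa using hu)
    · ring
  have hS' := (dominates_cycleGraph_iff (by omega)).mp (hF.1 _ hS'F)
  rw [← compl_insert_erase huw.ne, compl_compl] at hS'
  refine hS' (a + 2) ⟨mem_insert_self _ _, mem_insert_of_mem (mem_erase.mpr ⟨?_, ?_⟩),
    mem_insert_of_mem (mem_erase.mpr ⟨?_, ?_⟩)⟩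
  · exact ne_of_sub_eq_natCast (k := 2) two_pos (by omega) (by push_cast; ring)
  · rwa [show a + 2 + 1 = a + 3 by ring]
  · exact ne_of_sub_eq_natCast (k := 3) (by norm_num) (by omega) (by push_cast; ring)
  · rwa [show a + 2 + 2 = a + 4 by ring]

lemma le_card_of_autDomSet_cycleGraph (hn : 4 ≤ n) {S : Finset (Fin n)}
    (hS : AutDomSet (cycleGraph n) S) : n - 3 ≤ S.card := by
  obtain ⟨F, hF, hSF⟩ := hS
  by_contra! hlt
  have hT : NoThreeConsecutive Sᶜ := (dominates_cycleGraph_iff (by omega)).mp (hF.1 S hSF)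
  obtain ⟨T', a, hreach, h₀, h₁, h₃, h₄⟩ := exists_reflTransGen_pattern (by omega) hT
    (by rw [card_compl, Fintype.card_fin]; omega)
  rw [compl_compl] at hreach
  exact hF.compl_notMem_of_pattern hn h₀ h₁ h₃ h₄ (hF.mem_of_reflTransGen hreach hSF)

lemma NoThreeConsecutive.exists_fill (hn : 6 ≤ n) {T : Finset (Fin n)}
    (hT : NoThreeConsecutive T) (hcard : T.card ≤ 3) {v : Fin n} (hv : v ∈ T) :
    ∃ u ∉ T, (cycleGraph n).Adj u v ∧ NoThreeConsecutive (insert u (T.erase v)) := by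
  -- Otherwise each side of `v` holds either a vacancy next to `v` or two vacancies that would
  -- complete a triple, which makes four vacancies.
  by_contra! hbad
  have hL : v - 1 ∈ T ∨ (v - 3 ∈ T ∧ v - 2 ∈ T) := by
    by_contra! h
    exact hbad (v - 1) h.1 ((cycleGraph_adj_iff (by omega)).mpr (Or.inl rfl))
      (hT.insert_sub_one_erase (by omega) fun h' => h.2 h'.1 h'.2)
  have hR : v + 1 ∈ T ∨ (v + 2 ∈ T ∧ v + 3 ∈ T) := by
    by_contra! h
    exact hbad (v + 1) h.1 ((cycleGraph_adj_iff (by omega)).mpr (Or.inr rfl))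
      (hT.insert_add_one_erase (by omega) fun h' => h.2 h'.1 h'.2)
  have four : ∀ (a : Fin n) (s : Finset ℕ), s.card = 4 → (∀ i ∈ s, i < n) →
      (∀ i ∈ s, a + (i : Fin n) ∈ T) → False :=
    fun a s hs hsn hsT => by have := card_le_card_of_add_natCast_mem a hsn hsT; omega
  rcases hL with hL | ⟨hL₃, hL₂⟩ <;> rcases hR with hR | ⟨hR₂, hR₃⟩
  · exact hT (v - 1) ⟨hL, by rwa [sub_add_cancel], by rwa [show v - 1 + 2 = v + 1 by ring]⟩
  · refine four (v - 1) {0, 1, 3, 4} rfl (by simp; omega) ?_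
    simp only [mem_insert, mem_singleton, forall_eq_or_imp, forall_eq]
    push_cast
    exact ⟨by simpa, by simpa, by rwa [show v - 1 + 3 = v + 2 by ring],
      by rwa [show v - 1 + 4 = v + 3 by ring]⟩
  · refine four (v - 3) {0, 1, 3, 4} rfl (by simp; omega) ?_
    simp only [mem_insert, mem_singleton, forall_eq_or_imp, forall_eq]
    push_cast
    exact ⟨by simpa, by rwa [show v - 3 + 1 = v - 2 by ring], by simpa,
      by rwa [show v - 3 + 4 = v + 1 by ring]⟩
  · refine four (v - 3) {0, 1, 3, 5} rfl (by simp; omega) ?_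
    simp only [mem_insert, mem_singleton, forall_eq_or_imp, forall_eq]
    push_cast
    exact ⟨by simpa, by rwa [show v - 3 + 1 = v - 2 by ring], by simpa,
      by rwa [show v - 3 + 5 = v + 2 by ring]⟩

lemma autFamily_cycleGraph (hn : 6 ≤ n) :
    AutFamily (cycleGraph n) {S | Dominates (cycleGraph n) S ∧ S.card = n - 3} := by
  refine ⟨fun S hS => hS.1, ?_, fun S hS S' hdom hadj => ⟨hdom, hadj.card_eq.trans hS.2⟩⟩
  rintro S ⟨hdom, hcard⟩ v hv
  obtain ⟨u, hu, huv, hT'⟩ := ((dominates_cycleGraph_iff (by omega)).mp hdom).exists_fill hn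
    (by rw [card_compl, Fintype.card_fin]; omega) (mem_compl.mpr hv)
  have hmove := guardMove_compl (by omega) (mem_compl.mpr hv) hu huv hT'
  rw [compl_compl] at hmove
  refine ⟨_, ⟨hmove.1, hmove.2.card_eq.trans hcard⟩, hmove.2, ?_⟩
  simp [huv.ne']

lemma exists_dominates_cycleGraph_card (hn : 6 ≤ n) :
    ∃ S : Finset (Fin n), Dominates (cycleGraph n) S ∧ S.card = n - 3 := by
  set T := ({0, 1, 3} : Finset ℕ).image (Nat.cast : ℕ → Fin n)
  have hinj : Set.InjOn (Nat.cast : ℕ → Fin n) (Set.Iio n) := CharP.natCast_injOn_Iio (Fin n) n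
  have hcard : T.card = 3 :=
    card_image_of_injOn (hinj.mono fun i hi => by simp at hi; simp; omega)
  refine ⟨Tᶜ, (dominates_cycleGraph_iff (by omega)).mpr ?_, by
    rw [card_compl, Fintype.card_fin, hcard]⟩
  rw [compl_compl]
  rintro v ⟨h₀, h₁, h₂⟩
  simp only [T, mem_image, mem_insert, mem_singleton] at h₀ h₁ h₂
  obtain ⟨i, hi, rfl⟩ := h₀
  obtain ⟨j, hj, hj'⟩ := h₁
  obtain ⟨l, hl, hl'⟩ := h₂
  have hj'' : j = i + 1 := hinj (by simp; omega) (by simp; omega) (by push_cast; exact hj')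
  have hl'' : l = i + 2 := hinj (by simp; omega) (by simp; omega) (by push_cast; exact hl')
  omega

end Cycle

/-- the autonomous domination number of the cycle `C_n` is `n - 3`
for `n ≥ 6`. -/
theorem autDomNum_cycleGraph (n : ℕ) (hn : 6 ≤ n) :
    autDomNum (SimpleGraph.cycleGraph n) = n - 3 := by
  have : NeZero n := ⟨by omega⟩
  obtain ⟨S, hS, hcard⟩ := exists_dominates_cycleGraph_card hn
  have hS : AutDomSet (cycleGraph n) S := ⟨_, autFamily_cycleGraph hn, hS, hcard⟩
  refine le_antisymm (Nat.sInf_le ⟨S, hS, hcard⟩) (le_csInf ⟨_, S, hS, hcard⟩ ?_)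
  rintro k ⟨S', hS', rfl⟩
  exact le_card_of_autDomSet_cycleGraph (by omega) hS'
end

section
/- There exists a graph in which 2 guards suffice for autonomous domination but 3 guards do not: the graph with vertices a_1,…,a_4, b_1,…,b_5, with {a_i} inducing K_4, {b_i} inducing K_5, edges (a_i,b_i) for 1 ≤ i ≤ 4, and edge (b_1,a_2), has an autonomously dominating set of size 2 but no autonomously dominating set of size 3. -/
open SimpleGraph

variable {V : Type*} [DecidableEq V]

/-- The graph on `K₄` (vertices `0,…,3`, the `aᵢ`) and `K₅` (vertices `4,…,8`,
the `bᵢ`), with spokes `(aᵢ, bᵢ)` for `1 ≤ i ≤ 4` and the extra edge `(b₁, a₂)`. -/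
def houseWithConnection : SimpleGraph (Fin 9) :=
  SimpleGraph.fromRel (fun x y =>
    (x.val < 4 ∧ y.val < 4) ∨ (4 ≤ x.val ∧ 4 ≤ y.val) ∨
    (x.val < 4 ∧ y.val = x.val + 4) ∨ ((x, y) = ((1 : Fin 9), (4 : Fin 9))))


-- ==================== auxiliary material ====================

instance : DecidableRel houseWithConnection.Adj := fun x y =>
  decidable_of_iff _ (SimpleGraph.fromRel_adj _ x y).symm

instance (S : Finset (Fin 9)) : Decidable (Dominates houseWithConnection S) := by
  unfold Dominates; infer_instance

instance (S S' : Finset (Fin 9)) : Decidable (AdjacentSets houseWithConnection S S') := by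
  unfold AdjacentSets; infer_instance

lemma card_adjSets {G : SimpleGraph V} {S S' : Finset V}
    (h : AdjacentSets G S S') : S'.card = S.card := by
  obtain ⟨v, v', hv, hv', _, rfl⟩ := h
  have h1 : v' ∉ S.erase v := fun hh => hv' (Finset.mem_of_mem_erase hh)
  have h2 : 0 < S.card := Finset.card_pos.mpr ⟨v, hv⟩
  rw [Finset.card_insert_of_notMem h1, Finset.card_erase_of_mem hv]
  omega

/-- Rank table: distance to `{4,6,7}` in the move graph on dominating 3-sets. -/
def tbl : List (Finset (Fin 9) × ℕ) := [
(({0,1,4} : Finset (Fin 9)), 4),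
  (({0,1,5} : Finset (Fin 9)), 4),
  (({0,1,6} : Finset (Fin 9)), 3),
  (({0,1,7} : Finset (Fin 9)), 3),
  (({0,1,8} : Finset (Fin 9)), 4),
  (({0,2,4} : Finset (Fin 9)), 3),
  (({0,2,5} : Finset (Fin 9)), 3),
  (({0,2,6} : Finset (Fin 9)), 3),
  (({0,2,7} : Finset (Fin 9)), 2),
  (({0,2,8} : Finset (Fin 9)), 3),
  (({0,3,4} : Finset (Fin 9)), 3),
  (({0,3,5} : Finset (Fin 9)), 3),
  (({0,3,6} : Finset (Fin 9)), 2),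
  (({0,3,7} : Finset (Fin 9)), 3),
  (({0,3,8} : Finset (Fin 9)), 3),
  (({0,4,5} : Finset (Fin 9)), 3),
  (({0,4,6} : Finset (Fin 9)), 2),
  (({0,4,7} : Finset (Fin 9)), 2),
  (({0,4,8} : Finset (Fin 9)), 3),
  (({0,5,6} : Finset (Fin 9)), 2),
  (({0,5,7} : Finset (Fin 9)), 2),
  (({0,5,8} : Finset (Fin 9)), 3),
  (({0,6,7} : Finset (Fin 9)), 1),
  (({0,6,8} : Finset (Fin 9)), 2),
  (({0,7,8} : Finset (Fin 9)), 2),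
  (({1,2,4} : Finset (Fin 9)), 3),
  (({1,2,5} : Finset (Fin 9)), 3),
  (({1,2,6} : Finset (Fin 9)), 3),
  (({1,2,7} : Finset (Fin 9)), 2),
  (({1,2,8} : Finset (Fin 9)), 3),
  (({1,3,4} : Finset (Fin 9)), 3),
  (({1,3,5} : Finset (Fin 9)), 3),
  (({1,3,6} : Finset (Fin 9)), 2),
  (({1,3,7} : Finset (Fin 9)), 3),
  (({1,3,8} : Finset (Fin 9)), 3),
  (({1,4,5} : Finset (Fin 9)), 3),
  (({1,4,6} : Finset (Fin 9)), 2),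
  (({1,4,7} : Finset (Fin 9)), 2),
  (({1,4,8} : Finset (Fin 9)), 3),
  (({1,5,6} : Finset (Fin 9)), 2),
  (({1,5,7} : Finset (Fin 9)), 2),
  (({1,5,8} : Finset (Fin 9)), 3),
  (({1,6,7} : Finset (Fin 9)), 1),
  (({1,6,8} : Finset (Fin 9)), 2),
  (({1,7,8} : Finset (Fin 9)), 2),
  (({2,3,4} : Finset (Fin 9)), 2),
  (({2,3,5} : Finset (Fin 9)), 3),
  (({2,3,6} : Finset (Fin 9)), 3),
  (({2,3,7} : Finset (Fin 9)), 3),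
  (({2,3,8} : Finset (Fin 9)), 3),
  (({2,4,5} : Finset (Fin 9)), 2),
  (({2,4,6} : Finset (Fin 9)), 2),
  (({2,4,7} : Finset (Fin 9)), 1),
  (({2,4,8} : Finset (Fin 9)), 2),
  (({2,5,6} : Finset (Fin 9)), 3),
  (({2,5,7} : Finset (Fin 9)), 2),
  (({2,5,8} : Finset (Fin 9)), 3),
  (({2,6,7} : Finset (Fin 9)), 2),
  (({2,6,8} : Finset (Fin 9)), 3),
  (({2,7,8} : Finset (Fin 9)), 2),
  (({3,4,5} : Finset (Fin 9)), 2),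
  (({3,4,6} : Finset (Fin 9)), 1),
  (({3,4,7} : Finset (Fin 9)), 2),
  (({3,4,8} : Finset (Fin 9)), 2),
  (({3,5,6} : Finset (Fin 9)), 2),
  (({3,5,7} : Finset (Fin 9)), 3),
  (({3,5,8} : Finset (Fin 9)), 3),
  (({3,6,7} : Finset (Fin 9)), 2),
  (({3,6,8} : Finset (Fin 9)), 2),
  (({3,7,8} : Finset (Fin 9)), 3),
  (({4,6,7} : Finset (Fin 9)), 0)
]

def rnk (S : Finset (Fin 9)) : ℕ :=
  ((tbl.find? (fun p => decide (p.1 = S))).map Prod.snd).getD 0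

set_option maxRecDepth 100000 in
set_option maxHeartbeats 2000000 in
lemma move2 : ∀ a b v : Fin 9, a ≠ b → v ∉ ({a, b} : Finset (Fin 9)) →
    Dominates houseWithConnection {a, b} →
    ∃ u ∈ ({a, b} : Finset (Fin 9)), houseWithConnection.Adj u v ∧
      Dominates houseWithConnection (insert v (({a, b} : Finset (Fin 9)).erase u)) := by
  decide

set_option maxRecDepth 100000 in
set_option maxHeartbeats 2000000 in
lemma reach3 : ∀ S : Finset (Fin 9), Dominates houseWithConnection S → S.card = 3 →
    S = ({4, 6, 7} : Finset (Fin 9)) ∨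
    ∃ u ∈ S, ∃ v : Fin 9, v ∉ S ∧ houseWithConnection.Adj u v ∧
      Dominates houseWithConnection (insert v (S.erase u)) ∧
      rnk (insert v (S.erase u)) < rnk S := by
  decide

set_option maxRecDepth 100000 in
lemma bad467 : ∀ v v' : Fin 9, v ∈ ({4, 6, 7} : Finset (Fin 9)) →
    v' ∉ ({4, 6, 7} : Finset (Fin 9)) → houseWithConnection.Adj v v' →
    Dominates houseWithConnection (insert v' (({4, 6, 7} : Finset (Fin 9)).erase v)) →
    (5 : Fin 9) ∉ insert v' (({4, 6, 7} : Finset (Fin 9)).erase v) := by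
  decide

/-- in `houseWithConnection`, 2 guards suffice for autonomous domination
but 3 guards do not. -/
theorem two_guards_suffice_but_three_fail :
    (∃ S : Finset (Fin 9), AutDomSet houseWithConnection S ∧ S.card = 2) ∧
    ¬ ∃ S : Finset (Fin 9), AutDomSet houseWithConnection S ∧ S.card = 3 := by
  constructor
  · -- 2 guards suffice
    refine ⟨{0, 4}, ⟨{S | Dominates houseWithConnection S ∧ S.card = 2}, ?_, ?_⟩, by decide⟩
    · refine ⟨fun S hS => hS.1, ?_, ?_⟩
      · rintro S ⟨hdom, hcard⟩ v hv
        obtain ⟨a, b, hab, rfl⟩ := Finset.card_eq_two.mp hcard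
        obtain ⟨u, hu, hadj, hdom'⟩ := move2 a b v hab hv hdom
        have hAdj : AdjacentSets houseWithConnection {a, b}
            (insert v (({a, b} : Finset (Fin 9)).erase u)) := ⟨u, v, hu, hv, hadj, rfl⟩
        exact ⟨insert v (({a, b} : Finset (Fin 9)).erase u),
          ⟨hdom', (card_adjSets hAdj).trans hcard⟩, hAdj, Finset.mem_insert_self _ _⟩
      · rintro S ⟨_, hcard⟩ S' hdom' hAdj
        exact ⟨hdom', (card_adjSets hAdj).trans hcard⟩
    · exact ⟨by decide, by decide⟩
  · -- 3 guards fail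
    rintro ⟨S, ⟨F, hF, hSF⟩, hcard⟩
    obtain ⟨h1, h2, h3⟩ := hF
    -- first, {4,6,7} ∈ F
    have key : ∀ n : ℕ, ∀ T : Finset (Fin 9), T ∈ F → T.card = 3 → rnk T ≤ n →
        ({4, 6, 7} : Finset (Fin 9)) ∈ F := by
      intro n
      induction n with
      | zero =>
        intro T hT hc hr
        rcases reach3 T (h1 T hT) hc with h | ⟨u, hu, v, hv, hadj, hdom', hlt⟩
        · rwa [h] at hT
        · omega
      | succ n ih =>
        intro T hT hc hr
        rcases reach3 T (h1 T hT) hc with h | ⟨u, hu, v, hv, hadj, hdom', hlt⟩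
        · rwa [h] at hT
        · have hAdj : AdjacentSets houseWithConnection T (insert v (T.erase u)) :=
            ⟨u, v, hu, hv, hadj, rfl⟩
          exact ih _ (h3 T hT _ hdom' hAdj) ((card_adjSets hAdj).trans hc) (by omega)
    have h467 : ({4, 6, 7} : Finset (Fin 9)) ∈ F := key (rnk S) S hSF hcard le_rfl
    obtain ⟨S', hS'F, hAdj, h5⟩ := h2 _ h467 5 (by decide)
    obtain ⟨v, v', hv, hv', hadj, rfl⟩ := hAdj
    exact bad467 v v' hv hv' hadj (h1 _ hS'F) h5
end
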